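/- Let μ₊, μ₋, c₊, c₋ be positive real numbers and s ∈ ℂ. Suppose x₊, y₊, x₋, y₋ ∈ ℂ and nonnegative real numbers a₊, b₊, a₋, b₋, ã₊, b̃₊, ã₋, b̃₋ satisfy |x₊| ≤ a₊·ã₊, |y₊| ≤ b₊·b̃₊, |x₋| ≤ a₋·ã₋, and |y₋| ≤ b₋·b̃₋. Then | μ₊⁻¹·(x₊ + (s/c₊)²·y₊) + μ₋⁻¹·(x₋ + (s/c₋)²·y₋) | ≤ max{μ₊⁻¹, μ₋⁻¹} · max{1, c₊⁻², c₋⁻²} · √(a₊² + |s|²·b₊² + a₋² + |s|²·b₋²) · √(ã₊² + |s|²·b̃₊² + ã₋² + |s|²·b̃₋²). -/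

import Mathlib

/-- Four-term Cauchy–Schwarz in `ℝ`. -/
lemma cs4 (a1 a2 a3 a4 b1 b2 b3 b4 : ℝ)
    (h1 : 0 ≤ a1) (h2 : 0 ≤ a2) (h3 : 0 ≤ a3) (h4 : 0 ≤ a4)
    (g1 : 0 ≤ b1) (g2 : 0 ≤ b2) (g3 : 0 ≤ b3) (g4 : 0 ≤ b4) :
    a1 * b1 + a2 * b2 + a3 * b3 + a4 * b4 ≤
      Real.sqrt (a1 ^ 2 + a2 ^ 2 + a3 ^ 2 + a4 ^ 2) *
      Real.sqrt (b1 ^ 2 + b2 ^ 2 + b3 ^ 2 + b4 ^ 2) := by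
  rw [← Real.sqrt_mul (by positivity)]
  rw [show a1 * b1 + a2 * b2 + a3 * b3 + a4 * b4 =
      Real.sqrt ((a1 * b1 + a2 * b2 + a3 * b3 + a4 * b4) ^ 2) from
    (Real.sqrt_sq (by positivity)).symm]
  apply Real.sqrt_le_sqrt
  nlinarith [sq_nonneg (a1*b2 - a2*b1), sq_nonneg (a1*b3 - a3*b1),
    sq_nonneg (a1*b4 - a4*b1), sq_nonneg (a2*b3 - a3*b2),
    sq_nonneg (a2*b4 - a4*b2), sq_nonneg (a3*b4 - a4*b3)]

/-- Continuity estimate for the electromagnetic bilinear form, reduced to its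
scalar core: if `|x₊| ≤ a₊ ã₊`, `|y₊| ≤ b₊ b̃₊`, `|x₋| ≤ a₋ ã₋`, `|y₋| ≤ b₋ b̃₋`,
then `| μ₊⁻¹(x₊ + (s/c₊)² y₊) + μ₋⁻¹(x₋ + (s/c₋)² y₋) |` is bounded by
`max{μ₊⁻¹, μ₋⁻¹} · max{1, c₊⁻², c₋⁻²} · √(a₊² + |s|² b₊² + a₋² + |s|² b₋²) ·
√(ã₊² + |s|² b̃₊² + ã₋² + |s|² b̃₋²)`. -/
theorem continuity_scalar (μp μm cp cm : ℝ) (hμp : 0 < μp) (hμm : 0 < μm)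
    (hcp : 0 < cp) (hcm : 0 < cm) (s : ℂ)
    (xp yp xm ym : ℂ) (ap bp am bm tap tbp tam tbm : ℝ)
    (hap : 0 ≤ ap) (hbp : 0 ≤ bp) (ham : 0 ≤ am) (hbm : 0 ≤ bm)
    (htap : 0 ≤ tap) (htbp : 0 ≤ tbp) (htam : 0 ≤ tam) (htbm : 0 ≤ tbm)
    (hxp : ‖xp‖ ≤ ap * tap) (hyp : ‖yp‖ ≤ bp * tbp)
    (hxm : ‖xm‖ ≤ am * tam) (hym : ‖ym‖ ≤ bm * tbm) :
    ‖(μp⁻¹ : ℂ) * (xp + (s / (cp : ℂ)) ^ 2 * yp) +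
                 (μm⁻¹ : ℂ) * (xm + (s / (cm : ℂ)) ^ 2 * ym)‖ ≤
      max μp⁻¹ μm⁻¹ * max 1 (max (cp ^ 2)⁻¹ (cm ^ 2)⁻¹) *
        Real.sqrt (ap ^ 2 + (‖s‖) ^ 2 * bp ^ 2 +
                   am ^ 2 + (‖s‖) ^ 2 * bm ^ 2) *
        Real.sqrt (tap ^ 2 + (‖s‖) ^ 2 * tbp ^ 2 +
                   tam ^ 2 + (‖s‖) ^ 2 * tbm ^ 2) := by
  set t := ‖s‖ with ht
  set M := max μp⁻¹ μm⁻¹ with hM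
  set C := max 1 (max (cp ^ 2)⁻¹ (cm ^ 2)⁻¹) with hC
  have hMp : μp⁻¹ ≤ M := le_max_left _ _
  have hMm : μm⁻¹ ≤ M := le_max_right _ _
  have hC1 : (1 : ℝ) ≤ C := le_max_left _ _
  have hCp : (cp ^ 2)⁻¹ ≤ C := le_trans (le_max_left _ _) (le_max_right _ _)
  have hCm : (cm ^ 2)⁻¹ ≤ C := le_trans (le_max_right _ _) (le_max_right _ _)
  have ht0 : 0 ≤ t := norm_nonneg s
  -- step 1: triangle inequality bound
  have key : ‖(μp⁻¹ : ℂ) * (xp + (s / (cp : ℂ)) ^ 2 * yp) +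
                 (μm⁻¹ : ℂ) * (xm + (s / (cm : ℂ)) ^ 2 * ym)‖ ≤
      M * C * (ap * tap + (t * bp) * (t * tbp) + am * tam + (t * bm) * (t * tbm)) := by
    have e1 : ‖(s / (cp : ℂ)) ^ 2 * yp‖ = t ^ 2 / cp ^ 2 * ‖yp‖ := by
      simp [norm_mul, norm_pow, norm_div, Complex.norm_real, abs_of_pos hcp, div_pow, ← ht]
    have e2 : ‖(s / (cm : ℂ)) ^ 2 * ym‖ = t ^ 2 / cm ^ 2 * ‖ym‖ := by
      simp [norm_mul, norm_pow, norm_div, Complex.norm_real, abs_of_pos hcm, div_pow, ← ht]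
    calc ‖(μp⁻¹ : ℂ) * (xp + (s / (cp : ℂ)) ^ 2 * yp) +
                 (μm⁻¹ : ℂ) * (xm + (s / (cm : ℂ)) ^ 2 * ym)‖
        ≤ μp⁻¹ * (‖xp‖ + t ^ 2 / cp ^ 2 * ‖yp‖) +
          μm⁻¹ * (‖xm‖ + t ^ 2 / cm ^ 2 * ‖ym‖) := by
          refine le_trans (norm_add_le _ _) (add_le_add ?_ ?_)
          · rw [norm_mul, norm_inv, Complex.norm_real, Real.norm_of_nonneg hμp.le]
            gcongr
            exact le_trans (norm_add_le _ _) (by rw [e1])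
          · rw [norm_mul, norm_inv, Complex.norm_real, Real.norm_of_nonneg hμm.le]
            gcongr
            exact le_trans (norm_add_le _ _) (by rw [e2])
      _ ≤ M * (‖xp‖ + t ^ 2 / cp ^ 2 * ‖yp‖) +
          M * (‖xm‖ + t ^ 2 / cm ^ 2 * ‖ym‖) := by
          have h1 : 0 ≤ ‖xp‖ + t ^ 2 / cp ^ 2 * ‖yp‖ := by positivity
          have h2 : 0 ≤ ‖xm‖ + t ^ 2 / cm ^ 2 * ‖ym‖ := by positivity
          gcongr
      _ ≤ M * C * (ap * tap + (t * bp) * (t * tbp) + am * tam + (t * bm) * (t * tbm)) := by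
          have hM0 : 0 ≤ M := le_trans (inv_pos.mpr hμp).le hMp
          rw [mul_assoc]
          rw [← mul_add]
          gcongr
          have b1 : ‖xp‖ ≤ C * (ap * tap) :=
            le_trans hxp (le_mul_of_one_le_left (by positivity) hC1)
          have b2 : t ^ 2 / cp ^ 2 * ‖yp‖ ≤ C * ((t * bp) * (t * tbp)) := by
            rw [div_eq_mul_inv]
            calc t ^ 2 * (cp ^ 2)⁻¹ * ‖yp‖ ≤ t ^ 2 * C * (bp * tbp) := by
                  have h0 : (0:ℝ) ≤ ‖yp‖ := norm_nonneg yp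
                  gcongr
              _ = C * ((t * bp) * (t * tbp)) := by ring
          have b3 : ‖xm‖ ≤ C * (am * tam) :=
            le_trans hxm (le_mul_of_one_le_left (by positivity) hC1)
          have b4 : t ^ 2 / cm ^ 2 * ‖ym‖ ≤ C * ((t * bm) * (t * tbm)) := by
            rw [div_eq_mul_inv]
            calc t ^ 2 * (cm ^ 2)⁻¹ * ‖ym‖ ≤ t ^ 2 * C * (bm * tbm) := by
                  have h0 : (0:ℝ) ≤ ‖ym‖ := norm_nonneg ym
                  gcongr
              _ = C * ((t * bm) * (t * tbm)) := by ring
          calc ‖xp‖ + t ^ 2 / cp ^ 2 * ‖yp‖ +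
                (‖xm‖ + t ^ 2 / cm ^ 2 * ‖ym‖)
              ≤ C * (ap * tap) + C * ((t * bp) * (t * tbp)) +
                (C * (am * tam) + C * ((t * bm) * (t * tbm))) :=
                add_le_add (add_le_add b1 b2) (add_le_add b3 b4)
            _ = C * (ap * tap + (t * bp) * (t * tbp) + am * tam + (t * bm) * (t * tbm)) := by ring
  refine le_trans key ?_
  have hM0 : 0 ≤ M := le_trans (inv_pos.mpr hμp).le hMp
  have hC0 : 0 ≤ C := le_trans zero_le_one hC1
  have cs := cs4 ap (t * bp) am (t * bm) tap (t * tbp) tam (t * tbm)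
    hap (by positivity) ham (by positivity) htap (by positivity) htam (by positivity)
  have e3 : ap ^ 2 + (t * bp) ^ 2 + am ^ 2 + (t * bm) ^ 2 =
      ap ^ 2 + t ^ 2 * bp ^ 2 + am ^ 2 + t ^ 2 * bm ^ 2 := by ring
  have e4 : tap ^ 2 + (t * tbp) ^ 2 + tam ^ 2 + (t * tbm) ^ 2 =
      tap ^ 2 + t ^ 2 * tbp ^ 2 + tam ^ 2 + t ^ 2 * tbm ^ 2 := by ring
  rw [e3, e4] at cs
  calc M * C * (ap * tap + (t * bp) * (t * tbp) + am * tam + (t * bm) * (t * tbm))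
      ≤ M * C * (Real.sqrt (ap ^ 2 + t ^ 2 * bp ^ 2 + am ^ 2 + t ^ 2 * bm ^ 2) *
        Real.sqrt (tap ^ 2 + t ^ 2 * tbp ^ 2 + tam ^ 2 + t ^ 2 * tbm ^ 2)) := by
        gcongr
    _ = _ := by ring
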